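/- The K+4 points v₁, ..., v_{K+4} are affinely independent in ℝ^{K+3}; in particular, their convex hull is a (K+3)-dimensional simplex. -/

import Mathlib

/-! Since `v₁ = 0`, it suffices that `v₂, …, v_{K+4}` are linearly independent. As columns of a
square matrix they are upper triangular: the `(i, p)` entry vanishes for `p < i`, and the diagonal
entries `1/2`, `1/3`, `γ₁`, `(γ_k − γ_{k−1})(1 − γ_{k−1})²` and `(1 − γ_K)³` (`1` if `K = 0`)
are positive. -/

/-- The curve `c(x) = (x, x², x³, ((x−γ₁)₊)³, …, ((x−γ_K)₊)³)` in `ℝ^{K+3}`. -/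
noncomputable def pyrCurve (K : ℕ) (γ : Fin K → ℝ) (x : ℝ) : Fin (K + 3) → ℝ :=
  fun i =>
    if h0 : i.val = 0 then x
    else if h1 : i.val = 1 then x ^ 2
    else if h2 : i.val = 2 then x ^ 3
    else (max (x - γ ⟨i.val - 3, by have := i.isLt; omega⟩) 0) ^ 3

/-- The `K+4` vertices `v₁, …, v_{K+4}` of the enclosing polytope in `ℝ^{K+3}`
(here `0`-indexed: `pyrVert K γ p` is `v_{p+1}`). -/
noncomputable def pyrVert (K : ℕ) (γ : Fin K → ℝ) (p : Fin (K + 4)) : Fin (K + 3) → ℝ :=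
  fun i =>
    if hp0 : p.val = 0 then 0
    else if hp1 : p.val = 1 then
      if i.val = 0 then 1 / 2 else 0
    else if hp2 : p.val = 2 then
      if i.val = 0 then 2 / 3 else if i.val = 1 then 1 / 3 else 0
    else if hpl : p.val = K + 3 then
      if hi : i.val ≤ 2 then 1
      else (1 - γ ⟨i.val - 3, by have := i.isLt; omega⟩) ^ 3
    else
      let k : Fin K := ⟨p.val - 3, by have := p.isLt; omega⟩
      if hi0 : i.val = 0 then (2 + γ k) / 3
      else if hi1 : i.val = 1 then (1 + 2 * γ k) / 3
      else if hi2 : i.val = 2 then γ k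
      else
        let j : Fin K := ⟨i.val - 3, by have := i.isLt; omega⟩
        if j.val < k.val then (γ k - γ j) * (1 - γ j) ^ 2 else 0

theorem affineIndependent_iff_linearIndependent_succ_vsub_zero {k V P : Type*} [Ring k]
    [AddCommGroup V] [Module k V] [AddTorsor V P] {n : ℕ} (p : Fin (n + 1) → P) :
    AffineIndependent k p ↔ LinearIndependent k fun i : Fin n => (p i.succ -ᵥ p 0 : V) := by
  rw [affineIndependent_iff_linearIndependent_vsub k p 0,
    ← linearIndependent_equiv (finSuccAboveEquiv (0 : Fin (n + 1)))]
  simp only [Function.comp_def, finSuccAboveEquiv_apply, Fin.succAbove_zero]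

theorem Matrix.IsUpperTriangular.linearIndependent_cols {m R : Type*} [Fintype m] [LinearOrder m]
    [CommRing R] [IsDomain R] {A : Matrix m m R} (hA : A.IsUpperTriangular)
    (hdiag : ∀ i, A i i ≠ 0) : LinearIndependent R A.col :=
  linearIndependent_cols_of_det_ne_zero <| by
    rw [det_of_isUpperTriangular hA]
    exact Finset.prod_ne_zero_iff.2 fun i _ => hdiag i

section pyrVert

variable {K : ℕ} {γ : Fin K → ℝ}

theorem pyrVert_zero : pyrVert K γ 0 = 0 := by
  funext i
  simp [pyrVert]

theorem pyrVert_succ_apply_eq_zero_of_lt {p i : Fin (K + 3)} (h : p < i) :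
    pyrVert K γ p.succ i = 0 := by
  have hlt : p.val < i.val := h
  simp only [pyrVert, Fin.val_succ]
  split_ifs <;> first | rfl | omega

theorem pyrVert_succ_apply_self_pos (hγ0 : ∀ k, 0 < γ k) (hγ1 : ∀ k, γ k < 1)
    (hγmono : StrictMono γ) (p : Fin (K + 3)) : 0 < pyrVert K γ p.succ p := by
  have hp := p.isLt
  simp only [pyrVert, Fin.val_succ]
  split_ifs <;>
    first
    | contradiction
    | omega
    | exact hγ0 _
    | exact pow_pos (sub_pos.2 (hγ1 _)) 3
    | exact mul_pos (sub_pos.2 (hγmono (Fin.mk_lt_mk.2 (by omega)))) (pow_pos (sub_pos.2 (hγ1 _)) 2)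
    | norm_num

end pyrVert

/-- The `K+4` points `v₁, …, v_{K+4}` are affinely independent in `ℝ^{K+3}`. -/
theorem verts_affineIndependent (K : ℕ) (γ : Fin K → ℝ)
    (hγ0 : ∀ k, 0 < γ k) (hγ1 : ∀ k, γ k < 1) (hγmono : StrictMono γ) :
    AffineIndependent ℝ (pyrVert K γ) := by
  let A : Matrix (Fin (K + 3)) (Fin (K + 3)) ℝ := .of fun i p => pyrVert K γ p.succ i
  have hA : LinearIndependent ℝ A.col :=
    Matrix.IsUpperTriangular.linearIndependent_cols
      (fun _ _ h => pyrVert_succ_apply_eq_zero_of_lt h)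
      (fun p => (pyrVert_succ_apply_self_pos hγ0 hγ1 hγmono p).ne')
  rw [affineIndependent_iff_linearIndependent_succ_vsub_zero]
  simp only [pyrVert_zero, vsub_eq_sub, sub_zero]
  exact hA
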